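/- arXiv:math/0306370 — 2 statements merged into one kernel-verified Lean document; each statement's English description precedes it below -/
import Mathlib

section
/- Given three linearly independent rays r₀, r₁, r₂ ⊆ L⁺ from the origin in Minkowski 3-space and three positive numbers λ₀, λ₁, λ₂, there exist unique points uᵢ ∈ rᵢ (i = 0,1,2) such that √(−⟨uᵢ, uⱼ⟩) = λₖ whenever {i,j,k} = {0,1,2}. -/
/-!
Scaling `vᵢ` by `tᵢ > 0` scales `-⟨vᵢ, vⱼ⟩` by `tᵢ tⱼ`, so the conditions become the monomial
system `t₁t₂ = p`, `t₀t₂ = q`, `t₀t₁ = r` with `p = λ₀² / -⟨v₁, v₂⟩` etc., whose only positive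
solution is `t₀ = √(qr/p)`, `t₁ = r/t₀`, `t₂ = q/t₀`. This needs `⟨vᵢ, vⱼ⟩ < 0`, which is the
reverse Cauchy–Schwarz inequality on the light cone: `⟨u, v⟩ ≤ 0`, with equality only for
proportional `u, v`, excluded by linear independence.
-/

def mink (u v : Fin 3 → ℝ) : ℝ := u 0 * v 0 + u 1 * v 1 - u 2 * v 2

def Lpos : Set (Fin 3 → ℝ) := {u | mink u u = 0 ∧ 0 < u 2}

/-- λ-length of a pair of light-cone points. -/
noncomputable def lam (u v : Fin 3 → ℝ) : ℝ := Real.sqrt (-(mink u v))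

theorem LinearIndependent.ne_smul_of_ne {ι R M : Type*} [Ring R] [Nontrivial R] [AddCommGroup M]
    [Module R M] {v : ι → M} (hv : LinearIndependent R v) {i j : ι} (hij : i ≠ j) (c : R) :
    v j ≠ c • v i := by
  intro h
  have := (LinearIndepOn.pair_iff v hij).mp (hv.linearIndepOn _) c (-1) (by rw [h]; simp)
  exact neg_ne_zero.mpr one_ne_zero this.2

lemma mink_smul_smul (t s : ℝ) (u v : Fin 3 → ℝ) : mink (t • u) (s • v) = t * s * mink u v := by
  simp only [mink, Pi.smul_apply, smul_eq_mul]
  ring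

lemma eq_smul_of_mink_nonneg {u v : Fin 3 → ℝ} (hu : u ∈ Lpos) (hv : v ∈ Lpos)
    (h : 0 ≤ mink u v) : v = (v 2 / u 2) • u := by
  obtain ⟨hu, hu₂⟩ := hu
  obtain ⟨hv, hv₂⟩ := hv
  simp only [mink] at hu hv h
  -- Lagrange's identity turns `(u₀v₀ + u₁v₁)² ≥ (u₂v₂)²` into vanishing of the cross term.
  have lagrange : (u 0 * v 0 + u 1 * v 1) ^ 2 + (u 0 * v 1 - u 1 * v 0) ^ 2
      = (u 2 * v 2) ^ 2 := by
    linear_combination (u 0 ^ 2 + u 1 ^ 2) * hv + v 2 ^ 2 * hu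
  have hcross : u 0 * v 1 - u 1 * v 0 = 0 := by
    nlinarith [lagrange, sq_nonneg (u 0 * v 1 - u 1 * v 0), mul_pos hu₂ hv₂]
  have hdot : u 0 * v 0 + u 1 * v 1 = u 2 * v 2 := by
    nlinarith [lagrange, sq_nonneg (u 0 * v 1 - u 1 * v 0), mul_pos hu₂ hv₂]
  have e₀ : v 0 * u 2 = v 2 * u 0 := mul_left_cancel₀ hu₂.ne' <| by
    linear_combination -v 0 * hu + u 0 * hdot - u 1 * hcross
  have e₁ : v 1 * u 2 = v 2 * u 1 := mul_left_cancel₀ hu₂.ne' <| by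
    linear_combination -v 1 * hu + u 1 * hdot + u 0 * hcross
  ext i
  fin_cases i <;>
    simp only [Fin.zero_eta, Fin.mk_one, Fin.reduceFinMk, Fin.isValue, Pi.smul_apply,
      smul_eq_mul] <;>
    field_simp
  exacts [e₀, e₁]

lemma mink_neg_of_ne_smul {u v : Fin 3 → ℝ} (hu : u ∈ Lpos) (hv : v ∈ Lpos)
    (huv : ∀ c : ℝ, v ≠ c • u) : mink u v < 0 :=
  not_le.mp fun h ↦ huv _ (eq_smul_of_mink_nonneg hu hv h)

lemma lam_smul_smul_eq_iff {s r l : ℝ} {w x : Fin 3 → ℝ} (hs : 0 < s) (hr : 0 < r) (hl : 0 < l)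
    (hwx : mink w x < 0) : lam (s • w) (r • x) = l ↔ s * r = l ^ 2 / -mink w x := by
  have hm : 0 < -mink w x := neg_pos.mpr hwx
  rw [lam, mink_smul_smul, Real.sqrt_eq_iff_eq_sq (by nlinarith [mul_pos hs hr]) hl.le,
    eq_div_iff hm.ne']
  constructor <;> intro h <;> linarith

lemma exists_pos_pairwise_mul_eq {p q r : ℝ} (hp : 0 < p) (hq : 0 < q) (hr : 0 < r) :
    ∃ x > (0 : ℝ), ∃ y > (0 : ℝ), ∃ z > (0 : ℝ), y * z = p ∧ x * z = q ∧ x * y = r := by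
  set x := Real.sqrt (q * r / p)
  have hx : 0 < x := Real.sqrt_pos.mpr (by positivity)
  have hx2 : x ^ 2 = q * r / p := Real.sq_sqrt (by positivity)
  refine ⟨x, hx, r / x, by positivity, q / x, by positivity, ?_, by field_simp, by field_simp⟩
  field_simp
  rw [hx2]
  field_simp

lemma eq_of_pairwise_mul_eq {x y z x' y' z' : ℝ} (hx : 0 < x) (hx' : 0 < x')
    (hy'z' : y' * z' ≠ 0)
    (hyz : y * z = y' * z') (hxz : x * z = x' * z') (hxy : x * y = x' * y') :
    x = x' ∧ y = y' ∧ z = z' := by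
  have hsq : x ^ 2 = x' ^ 2 := mul_right_cancel₀ hy'z' <| by
    linear_combination -x ^ 2 * hyz + x * y * hxz + x' * z' * hxy
  obtain rfl : x = x' := (pow_left_inj₀ hx.le hx'.le two_ne_zero).mp hsq
  exact ⟨rfl, mul_left_cancel₀ hx.ne' hxy, mul_left_cancel₀ hx.ne' hxz⟩

theorem stmt1 (v₀ v₁ v₂ : Fin 3 → ℝ) (h₀ : v₀ ∈ Lpos) (h₁ : v₁ ∈ Lpos) (h₂ : v₂ ∈ Lpos)
    (hli : LinearIndependent ℝ ![v₀, v₁, v₂])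
    (l₀ l₁ l₂ : ℝ) (hl₀ : 0 < l₀) (hl₁ : 0 < l₁) (hl₂ : 0 < l₂) :
    ∃! u : Fin 3 → (Fin 3 → ℝ),
      ((∃ t > (0:ℝ), u 0 = t • v₀) ∧ (∃ t > (0:ℝ), u 1 = t • v₁) ∧ (∃ t > (0:ℝ), u 2 = t • v₂)) ∧
      lam (u 1) (u 2) = l₀ ∧ lam (u 0) (u 2) = l₁ ∧ lam (u 0) (u 1) = l₂ := by
  have m₁₂ : mink v₁ v₂ < 0 :=
    mink_neg_of_ne_smul h₁ h₂ (hli.ne_smul_of_ne (i := 1) (j := 2) (by decide))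
  have m₀₂ : mink v₀ v₂ < 0 :=
    mink_neg_of_ne_smul h₀ h₂ (hli.ne_smul_of_ne (i := 0) (j := 2) (by decide))
  have m₀₁ : mink v₀ v₁ < 0 :=
    mink_neg_of_ne_smul h₀ h₁ (hli.ne_smul_of_ne (i := 0) (j := 1) (by decide))
  obtain ⟨t₀, ht₀, t₁, ht₁, t₂, ht₂, e₀, e₁, e₂⟩ := exists_pos_pairwise_mul_eq
    (div_pos (pow_pos hl₀ 2) (neg_pos.mpr m₁₂)) (div_pos (pow_pos hl₁ 2) (neg_pos.mpr m₀₂))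
    (div_pos (pow_pos hl₂ 2) (neg_pos.mpr m₀₁))
  refine ⟨![t₀ • v₀, t₁ • v₁, t₂ • v₂],
    ⟨⟨⟨t₀, ht₀, rfl⟩, ⟨t₁, ht₁, rfl⟩, ⟨t₂, ht₂, rfl⟩⟩, ?_, ?_, ?_⟩, ?_⟩
  · exact (lam_smul_smul_eq_iff ht₁ ht₂ hl₀ m₁₂).mpr e₀
  · exact (lam_smul_smul_eq_iff ht₀ ht₂ hl₁ m₀₂).mpr e₁
  · exact (lam_smul_smul_eq_iff ht₀ ht₁ hl₂ m₀₁).mpr e₂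
  rintro u ⟨⟨⟨s₀, hs₀, hu₀⟩, ⟨s₁, hs₁, hu₁⟩, ⟨s₂, hs₂, hu₂⟩⟩, hL₀, hL₁, hL₂⟩
  rw [hu₁, hu₂, lam_smul_smul_eq_iff hs₁ hs₂ hl₀ m₁₂, ← e₀] at hL₀
  rw [hu₀, hu₂, lam_smul_smul_eq_iff hs₀ hs₂ hl₁ m₀₂, ← e₁] at hL₁
  rw [hu₀, hu₁, lam_smul_smul_eq_iff hs₀ hs₁ hl₂ m₀₁, ← e₂] at hL₂
  obtain ⟨rfl, rfl, rfl⟩ := eq_of_pairwise_mul_eq hs₀ ht₀ (by positivity) hL₀ hL₁ hL₂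
  ext1 i
  fin_cases i <;> assumption
end

section
/- Given two points u₀, u₁ ∈ L⁺ not lying on a common ray through the origin, and two positive numbers λ₀, λ₁, on each side of the plane through the origin spanned by u₀ and u₁ there is a unique point v ∈ L⁺ satisfying √(−⟨v, uᵢ⟩) = λᵢ for i = 0, 1. -/
/-- Determinant of three vectors in ℝ³; its sign records the side of the plane
spanned by the first two vectors on which the third lies. -/
def det3 (u v w : Fin 3 → ℝ) : ℝ :=
  u 0 * (v 1 * w 2 - v 2 * w 1) - u 1 * (v 0 * w 2 - v 2 * w 0)
    + u 2 * (v 0 * w 1 - v 1 * w 0)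

/-- Cauchy–Schwarz style: the Minkowski pairing of two positive null vectors
is nonpositive. -/
lemma mink_nonpos_aux (a0 a1 a2 b0 b1 b2 : ℝ) (ha : a0^2+a1^2 = a2^2)
    (hb : b0^2+b1^2 = b2^2) (ha2 : 0 < a2) (hb2 : 0 < b2) :
    a0*b0+a1*b1-a2*b2 ≤ 0 := by
  nlinarith [sq_nonneg (a0*b1-a1*b0), mul_pos ha2 hb2,
    sq_nonneg (a0*b0+a1*b1+a2*b2), sq_nonneg (a0*b0+a1*b1-a2*b2)]

/-- Equality case of the previous lemma: the two vectors are proportional. -/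
lemma mink_eq_aux (a0 a1 a2 b0 b1 b2 : ℝ) (ha : a0^2+a1^2 = a2^2)
    (hb : b0^2+b1^2 = b2^2) (he : a0*b0+a1*b1-a2*b2 = 0) :
    b0*a2 = b2*a0 ∧ b1*a2 = b2*a1 := by
  have h1 : (a0*b1-a1*b0)^2 = 0 := by
    linear_combination (b0^2+b1^2) * ha + a2^2 * hb - (a0*b0+a1*b1+a2*b2) * he
  have h2 : (a2*b0-b2*a0)^2 = (a0*b1-a1*b0)^2 := by
    linear_combination -b0^2*ha - a0^2*hb + 2*a0*b0*he
  have h3 : (a2*b1-b2*a1)^2 = (a0*b1-a1*b0)^2 := by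
    linear_combination -b1^2*ha - a1^2*hb + 2*a1*b1*he
  constructor
  · nlinarith [h2, h1]
  · nlinarith [h3, h1]

/-- A null vector pairing negatively with a positive null vector lies in the
positive cone. -/
lemma pos_of_neg_pair (a0 a1 a2 b0 b1 b2 : ℝ) (ha : a0^2+a1^2 = a2^2)
    (hb : b0^2+b1^2 = b2^2) (ha2 : 0 < a2)
    (hneg : a0*b0+a1*b1-a2*b2 < 0) : 0 < b2 := by
  by_contra h
  push_neg at h
  nlinarith [sq_nonneg (a0*b1-a1*b0), mul_nonneg ha2.le (neg_nonneg.mpr h),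
    sq_nonneg (a0*b0+a1*b1)]

lemma sqrt_eq_pos {x l : ℝ} (hl : 0 < l) (h : Real.sqrt x = l) : x = l^2 := by
  have hx : 0 ≤ x := by
    by_contra hx
    push_neg at hx
    rw [Real.sqrt_eq_zero_of_nonpos hx.le] at h
    exact absurd h.symm hl.ne'
  rw [← h, Real.sq_sqrt hx]

set_option maxHeartbeats 1000000 in
/-- Coordinate form of the existence part. -/
lemma exists_sol (A0 A1 A2 B0 B1 B2 l₀ l₁ ε : ℝ)
    (hq0 : A0^2+A1^2 = A2^2) (hq1 : B0^2+B1^2 = B2^2)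
    (hA2 : 0 < A2) (hB2 : 0 < B2)
    (hM : A0*B0+A1*B1-A2*B2 < 0)
    (hl₀ : 0 < l₀) (hl₁ : 0 < l₁) (hε2 : ε^2 = 1) :
    ∃ x0 x1 x2 : ℝ, x0^2+x1^2 = x2^2 ∧ 0 < x2 ∧
      x0*A0+x1*A1-x2*A2 = -l₀^2 ∧ x0*B0+x1*B1-x2*B2 = -l₁^2 ∧
      0 < ε * (A0*(B1*x2-B2*x1) - A1*(B0*x2-B2*x0) + A2*(B0*x1-B1*x0)) := by
  obtain ⟨M, hM_def⟩ : ∃ q : ℝ, q = A0*B0+A1*B1-A2*B2 := ⟨_, rfl⟩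
  have hM' : M < 0 := by rw [hM_def]; exact hM
  have hMne : M ≠ 0 := hM'.ne
  obtain ⟨p0, hp0⟩ : ∃ q : ℝ, q = A1*B2-A2*B1 := ⟨_, rfl⟩
  obtain ⟨p1, hp1⟩ : ∃ q : ℝ, q = A2*B0-A0*B2 := ⟨_, rfl⟩
  obtain ⟨p2, hp2⟩ : ∃ q : ℝ, q = A0*B1-A1*B0 := ⟨_, rfl⟩
  have e2 : p0^2+p1^2-p2^2 = M^2 := by
    rw [hp0, hp1, hp2, hM_def]; linear_combination (-(B0^2+B1^2-B2^2))*hq0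
  obtain ⟨a, ha⟩ : ∃ q : ℝ, q = -l₁^2 / M := ⟨_, rfl⟩
  obtain ⟨b, hb⟩ : ∃ q : ℝ, q = -l₀^2 / M := ⟨_, rfl⟩
  have harg : 0 < -2*l₀^2*l₁^2/M^3 := by
    apply div_pos_of_neg_of_neg
    · nlinarith [pow_pos hl₀ 2, pow_pos hl₁ 2]
    · have : 0 < M^2 := by positivity
      nlinarith
  obtain ⟨c, hc⟩ : ∃ q : ℝ, q = ε * Real.sqrt (-2*l₀^2*l₁^2/M^3) := ⟨_, rfl⟩
  have hεc : 0 < ε * c := by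
    have : ε * c = Real.sqrt (-2*l₀^2*l₁^2/M^3) := by
      rw [hc, ← mul_assoc, ← sq, hε2, one_mul]
    rw [this]
    exact Real.sqrt_pos.mpr harg
  have hc2 : c^2 = -2*l₀^2*l₁^2/M^3 := by
    rw [hc, mul_pow, hε2, one_mul, Real.sq_sqrt harg.le]
  obtain ⟨X0, hX0⟩ : ∃ q : ℝ, q = a*A0 + b*B0 + c*p0 := ⟨_, rfl⟩
  obtain ⟨X1, hX1⟩ : ∃ q : ℝ, q = a*A1 + b*B1 + c*p1 := ⟨_, rfl⟩
  obtain ⟨X2, hX2⟩ : ∃ q : ℝ, q = a*A2 + b*B2 - c*p2 := ⟨_, rfl⟩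
  have hnull : X0^2+X1^2 = X2^2 := by
    have hab : 2*a*b*M + c^2*M^2 = 0 := by
      rw [ha, hb, hc2]; field_simp; ring
    have e1 : X0^2 + X1^2 - X2^2 = 2*a*b*M + c^2*(p0^2+p1^2-p2^2) := by
      rw [hX0, hX1, hX2, hp0, hp1, hp2, hM_def]
      linear_combination a^2*hq0 + b^2*hq1
    rw [e2] at e1
    linarith [e1, hab]
  have hpairA : X0*A0+X1*A1-X2*A2 = -l₀^2 := by
    have hbM : b*M = -l₀^2 := by rw [hb]; field_simp
    rw [hX0, hX1, hX2, hp0, hp1, hp2]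
    rw [hM_def] at hbM
    linear_combination a*hq0 + hbM
  have hpairB : X0*B0+X1*B1-X2*B2 = -l₁^2 := by
    have haM : a*M = -l₁^2 := by rw [ha]; field_simp
    rw [hX0, hX1, hX2, hp0, hp1, hp2]
    rw [hM_def] at haM
    linear_combination b*hq1 + haM
  have hX2pos : 0 < X2 := by
    apply pos_of_neg_pair A0 A1 A2 X0 X1 X2 hq0 hnull hA2
    have hl : (0:ℝ) < l₀^2 := by positivity
    linarith [hpairA]
  refine ⟨X0, X1, X2, hnull, hX2pos, hpairA, hpairB, ?_⟩
  have hD : A0*(B1*X2-B2*X1) - A1*(B0*X2-B2*X0) + A2*(B0*X1-B1*X0)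
      = c * (p0^2+p1^2-p2^2) := by
    rw [hX0, hX1, hX2, hp0, hp1, hp2]; ring
  rw [hD, e2]
  have h5 : ε * (c * M^2) = (ε*c) * M^2 := by ring
  rw [h5]
  have h2 : 0 < M^2 := by positivity
  exact mul_pos hεc h2

set_option maxHeartbeats 1000000 in
/-- Coordinate form of the uniqueness part. -/
lemma uniq_sol (A0 A1 A2 B0 B1 B2 l₀ l₁ ε : ℝ)
    (hq0 : A0^2+A1^2 = A2^2) (hq1 : B0^2+B1^2 = B2^2)
    (hA2 : 0 < A2) (hB2 : 0 < B2)
    (hM : A0*B0+A1*B1-A2*B2 < 0)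
    (hl₀ : 0 < l₀) (hl₁ : 0 < l₁) (hε2 : ε^2 = 1)
    (x0 x1 x2 y0 y1 y2 : ℝ)
    (hxn : x0^2+x1^2 = x2^2) (hx2 : 0 < x2)
    (hxA : x0*A0+x1*A1-x2*A2 = -l₀^2) (hxB : x0*B0+x1*B1-x2*B2 = -l₁^2)
    (hxD : 0 < ε * (A0*(B1*x2-B2*x1) - A1*(B0*x2-B2*x0) + A2*(B0*x1-B1*x0)))
    (hyn : y0^2+y1^2 = y2^2) (hy2 : 0 < y2)
    (hyA : y0*A0+y1*A1-y2*A2 = -l₀^2) (hyB : y0*B0+y1*B1-y2*B2 = -l₁^2)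
    (hyD : 0 < ε * (A0*(B1*y2-B2*y1) - A1*(B0*y2-B2*y0) + A2*(B0*y1-B1*y0))) :
    x0 = y0 ∧ x1 = y1 ∧ x2 = y2 := by
  rcases lt_or_eq_of_le (mink_nonpos_aux x0 x1 x2 y0 y1 y2 hxn hyn hx2 hy2) with hlt | heq
  case inr =>
    -- proportional case
    obtain ⟨e0, e1⟩ := mink_eq_aux x0 x1 x2 y0 y1 y2 hxn hyn heq
    have key2 : x2 * l₀^2 = y2 * l₀^2 := by
      linear_combination x2*hyA - y2*hxA - A0*e0 - A1*e1
    have h22 : x2 = y2 := mul_right_cancel₀ (by positivity) key2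
    have h00 : x0 = y0 := by
      have k : x0 * x2 = y0 * x2 := by linear_combination -e0 + x0*h22
      exact mul_right_cancel₀ hx2.ne' k
    have h11 : x1 = y1 := by
      have k : x1 * x2 = y1 * x2 := by linear_combination -e1 + x1*h22
      exact mul_right_cancel₀ hx2.ne' k
    exact ⟨h00, h11, h22⟩
  case inl =>
    exfalso
    obtain ⟨w0, hw0⟩ : ∃ q : ℝ, q = x0 - y0 := ⟨_, rfl⟩
    obtain ⟨w1, hw1⟩ : ∃ q : ℝ, q = x1 - y1 := ⟨_, rfl⟩
    obtain ⟨w2, hw2⟩ : ∃ q : ℝ, q = x2 - y2 := ⟨_, rfl⟩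
    have h1 : w0*A0+w1*A1-w2*A2 = 0 := by rw [hw0, hw1, hw2]; linear_combination hxA - hyA
    have h2 : w0*B0+w1*B1-w2*B2 = 0 := by rw [hw0, hw1, hw2]; linear_combination hxB - hyB
    obtain ⟨p0, hp0⟩ : ∃ q : ℝ, q = A1*B2-A2*B1 := ⟨_, rfl⟩
    obtain ⟨p1, hp1⟩ : ∃ q : ℝ, q = A2*B0-A0*B2 := ⟨_, rfl⟩
    obtain ⟨p2, hp2⟩ : ∃ q : ℝ, q = A0*B1-A1*B0 := ⟨_, rfl⟩
    have e2 : p0^2+p1^2-p2^2 = (A0*B0+A1*B1-A2*B2)^2 := by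
      rw [hp0, hp1, hp2]; linear_combination (-(B0^2+B1^2-B2^2))*hq0
    have hpp : 0 < p0^2+p1^2+p2^2 := by
      have hMM : 0 < (A0*B0+A1*B1-A2*B2)*(A0*B0+A1*B1-A2*B2) := mul_pos_of_neg_of_neg hM hM
      have hMM2 : (A0*B0+A1*B1-A2*B2)^2 = (A0*B0+A1*B1-A2*B2)*(A0*B0+A1*B1-A2*B2) := by ring
      have h3 := sq_nonneg p2
      linarith [e2]
    obtain ⟨s, hs⟩ : ∃ q : ℝ, q = (w0*p0+w1*p1-w2*p2)/(p0^2+p1^2+p2^2) := ⟨_, rfl⟩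
    obtain ⟨z0, hz0⟩ : ∃ q : ℝ, q = w0 - s*p0 := ⟨_, rfl⟩
    obtain ⟨z1, hz1⟩ : ∃ q : ℝ, q = w1 - s*p1 := ⟨_, rfl⟩
    obtain ⟨z2, hz2⟩ : ∃ q : ℝ, q = -w2 - s*p2 := ⟨_, rfl⟩
    have hzp : z0*p0+z1*p1+z2*p2 = 0 := by
      rw [hz0, hz1, hz2, hs]; field_simp; ring
    have c01 : w0*p1 - w1*p0 = 0 := by rw [hp0, hp1]; linear_combination -B2*h1 + A2*h2
    have c12 : w1*p2 - (-w2)*p1 = 0 := by rw [hp1, hp2]; linear_combination -B0*h1 + A0*h2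
    have c20 : (-w2)*p0 - w0*p2 = 0 := by rw [hp0, hp2]; linear_combination -B1*h1 + A1*h2
    have zc01 : z0*p1 - z1*p0 = 0 := by rw [hz0, hz1]; linear_combination c01
    have zc12 : z1*p2 - z2*p1 = 0 := by rw [hz1, hz2]; linear_combination c12
    have zc20 : z2*p0 - z0*p2 = 0 := by rw [hz0, hz2]; linear_combination c20
    have lagr : (z0^2+z1^2+z2^2)*(p0^2+p1^2+p2^2)
        = (z0*p0+z1*p1+z2*p2)^2 + (z0*p1-z1*p0)^2 + (z1*p2-z2*p1)^2 + (z2*p0-z0*p2)^2 := by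
      ring
    rw [hzp, zc01, zc12, zc20] at lagr
    norm_num at lagr
    have hsum : z0^2+z1^2+z2^2 = 0 := lagr.resolve_right hpp.ne'
    have hz0' : z0 = 0 := by
      have a1 := sq_nonneg z0; have a2 := sq_nonneg z1; have a3 := sq_nonneg z2
      have : z0^2 = 0 := by linarith
      exact pow_eq_zero_iff (by norm_num) |>.mp this
    have hz1' : z1 = 0 := by
      have a1 := sq_nonneg z0; have a2 := sq_nonneg z1; have a3 := sq_nonneg z2
      have : z1^2 = 0 := by linarith
      exact pow_eq_zero_iff (by norm_num) |>.mp this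
    have hz2' : z2 = 0 := by
      have a1 := sq_nonneg z0; have a2 := sq_nonneg z1; have a3 := sq_nonneg z2
      have : z2^2 = 0 := by linarith
      exact pow_eq_zero_iff (by norm_num) |>.mp this
    have hw0' : w0 = s*p0 := by rw [hz0] at hz0'; linarith
    have hw1' : w1 = s*p1 := by rw [hz1] at hz1'; linarith
    have hw2' : w2 = -(s*p2) := by rw [hz2] at hz2'; linarith
    obtain ⟨DX, hDX⟩ : ∃ q : ℝ, q = p0*x0+p1*x1+p2*x2 := ⟨_, rfl⟩
    obtain ⟨DY, hDY⟩ : ∃ q : ℝ, q = p0*y0+p1*y1+p2*y2 := ⟨_, rfl⟩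
    have d1 : A0*(B1*x2-B2*x1) - A1*(B0*x2-B2*x0) + A2*(B0*x1-B1*x0) = DX := by
      rw [hDX, hp0, hp1, hp2]; ring
    have d2 : A0*(B1*y2-B2*y1) - A1*(B0*y2-B2*y0) + A2*(B0*y1-B1*y0) = DY := by
      rw [hDY, hp0, hp1, hp2]; ring
    rw [d1] at hxD
    rw [d2] at hyD
    have f1 : x0*w0+x1*w1-x2*w2 = s*DX := by rw [hw0', hw1', hw2', hDX]; ring
    have f2 : y0*w0+y1*w1-y2*w2 = s*DY := by rw [hw0', hw1', hw2', hDY]; ring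
    have g1 : x0*w0+x1*w1-x2*w2 = -(x0*y0+x1*y1-x2*y2) := by
      rw [hw0, hw1, hw2]; linear_combination hxn
    have g2 : y0*w0+y1*w1-y2*w2 = x0*y0+x1*y1-x2*y2 := by
      rw [hw0, hw1, hw2]; linear_combination -hyn
    have sDx : 0 < s*DX := by rw [← f1, g1]; linarith
    have sDy : s*DY < 0 := by rw [← f2, g2]; linarith
    have hposDD : 0 < DX*DY := by
      have h := mul_pos hxD hyD
      have e : (ε*DX)*(ε*DY) = DX*DY := by linear_combination (DX*DY)*hε2
      rw [e] at h; exact h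
    have hnegDD : (s*DX)*(s*DY) < 0 := mul_neg_of_pos_of_neg sDx sDy
    have e3 : (s*DX)*(s*DY) = s^2*(DX*DY) := by ring
    have h4 : 0 ≤ s^2*(DX*DY) := mul_nonneg (sq_nonneg s) hposDD.le
    rw [e3] at hnegDD
    linarith

set_option maxHeartbeats 1000000 in
theorem stmt2 (u₀ u₁ : Fin 3 → ℝ) (h₀ : u₀ ∈ Lpos) (h₁ : u₁ ∈ Lpos)
    (hray : ¬ ∃ t : ℝ, u₁ = t • u₀)
    (l₀ l₁ : ℝ) (hl₀ : 0 < l₀) (hl₁ : 0 < l₁) :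
    ∀ ε : ℝ, ε = 1 ∨ ε = -1 →
      ∃! v : Fin 3 → ℝ, v ∈ Lpos ∧ 0 < ε * det3 u₀ u₁ v ∧
        lam v u₀ = l₀ ∧ lam v u₁ = l₁ := by
  intro ε hε
  obtain ⟨hn0, hp0⟩ := h₀
  obtain ⟨hn1, hp1⟩ := h₁
  have hq0 : (u₀ 0)^2 + (u₀ 1)^2 = (u₀ 2)^2 := by
    have := hn0; unfold mink at this; linear_combination this
  have hq1 : (u₁ 0)^2 + (u₁ 1)^2 = (u₁ 2)^2 := by
    have := hn1; unfold mink at this; linear_combination this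
  have hε2 : ε^2 = 1 := by rcases hε with h|h <;> rw [h] <;> norm_num
  -- the Minkowski pairing of u₀ and u₁ is negative
  have hM : u₀ 0 * u₁ 0 + u₀ 1 * u₁ 1 - u₀ 2 * u₁ 2 < 0 := by
    rcases lt_or_eq_of_le (mink_nonpos_aux _ _ _ _ _ _ hq0 hq1 hp0 hp1) with h | h
    · exact h
    · exfalso
      obtain ⟨e0, e1⟩ := mink_eq_aux _ _ _ _ _ _ hq0 hq1 h
      apply hray
      have c0 : u₁ 0 = (u₁ 2 / u₀ 2) * u₀ 0 := by field_simp; linarith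
      have c1 : u₁ 1 = (u₁ 2 / u₀ 2) * u₀ 1 := by field_simp; linarith
      have c2 : u₁ 2 = (u₁ 2 / u₀ 2) * u₀ 2 := by field_simp
      refine ⟨u₁ 2 / u₀ 2, funext fun i => ?_⟩
      fin_cases i
      · exact c0
      · exact c1
      · exact c2
  obtain ⟨X0, X1, X2, hxn, hx2, hxA, hxB, hxD⟩ :=
    exists_sol (u₀ 0) (u₀ 1) (u₀ 2) (u₁ 0) (u₁ 1) (u₁ 2) l₀ l₁ ε
      hq0 hq1 hp0 hp1 hM hl₀ hl₁ hε2
  refine ⟨![X0, X1, X2], ⟨⟨?_, ?_⟩, ?_, ?_, ?_⟩, ?_⟩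
  · show (X0*X0 + X1*X1 - X2*X2 : ℝ) = 0
    linear_combination hxn
  · show (0:ℝ) < X2
    exact hx2
  · show 0 < ε * (u₀ 0 * (u₁ 1 * X2 - u₁ 2 * X1) - u₀ 1 * (u₁ 0 * X2 - u₁ 2 * X0)
      + u₀ 2 * (u₁ 0 * X1 - u₁ 1 * X0))
    exact hxD
  · show Real.sqrt (-(X0 * u₀ 0 + X1 * u₀ 1 - X2 * u₀ 2)) = l₀
    rw [hxA]
    rw [neg_neg]
    exact Real.sqrt_sq hl₀.le
  · show Real.sqrt (-(X0 * u₁ 0 + X1 * u₁ 1 - X2 * u₁ 2)) = l₁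
    rw [hxB]
    rw [neg_neg]
    exact Real.sqrt_sq hl₁.le
  · rintro v' ⟨⟨hn', hp2'⟩, hD', hlam0', hlam1'⟩
    have hyn : (v' 0)^2 + (v' 1)^2 = (v' 2)^2 := by
      have := hn'; unfold mink at this; linear_combination this
    have hyA : v' 0 * u₀ 0 + v' 1 * u₀ 1 - v' 2 * u₀ 2 = -l₀^2 := by
      have := sqrt_eq_pos hl₀ hlam0'
      unfold mink at this; linarith
    have hyB : v' 0 * u₁ 0 + v' 1 * u₁ 1 - v' 2 * u₁ 2 = -l₁^2 := by
      have := sqrt_eq_pos hl₁ hlam1'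
      unfold mink at this; linarith
    have hyD : 0 < ε * (u₀ 0 * (u₁ 1 * v' 2 - u₁ 2 * v' 1)
        - u₀ 1 * (u₁ 0 * v' 2 - u₁ 2 * v' 0)
        + u₀ 2 * (u₁ 0 * v' 1 - u₁ 1 * v' 0)) := hD'
    obtain ⟨k0, k1, k2⟩ :=
      uniq_sol (u₀ 0) (u₀ 1) (u₀ 2) (u₁ 0) (u₁ 1) (u₁ 2) l₀ l₁ ε
        hq0 hq1 hp0 hp1 hM hl₀ hl₁ hε2
        (v' 0) (v' 1) (v' 2) X0 X1 X2
        hyn hp2' hyA hyB hyD hxn hx2 hxA hxB hxD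
    funext i
    fin_cases i
    · exact k0
    · exact k1
    · exact k2
end
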